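/- arXiv:2202.13173 — 4 statements merged into one kernel-verified Lean document; each statement's English description precedes it below -/
import Mathlib

section
/- Let (X_n)_{n≥1} be a sequence of independent, identically distributed real random variables with E[X_1] = 0 and E[|X_1|^{2+ε}] < ∞ for some ε > 0. Then for every ε̄ > 0 there exist constants c > 0 and δ > 0 such that for all n ≥ 1, P(|Σ_{i=1}^{n} X_i| ≥ ε̄ n) ≤ c · n^{-(1+δ)}. -/
/-!
Truncate every `X i` at level `n` and recentre it. On the event `ε̄ n ≤ |S_n|` either some
`|X i| ≥ n`, which by Markov's inequality has probability at most `n · E|X|^p / n^p`, or the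
recentred truncated sum `T_n` is at least `ε̄ n / 2`, because recentring moves `S_n` by at most
`n · E|X|^p / n^(p-1) = o(n)`. Independence gives `E T_n^4 ≤ n E Z^4 + 3 (n E Z^2)^2`, where
the recentred truncated summands `Z` satisfy `E Z^4 = O(n^(4-p))` and `E Z^2 = O(1)`, so
Markov's inequality for the fourth power bounds the second event by `O(n^(1-p))` as well.
Taking `p = 2 + min ε 1` gives `δ = min ε 1`.
-/

open MeasureTheory ProbabilityTheory Filter

section Moments

variable {Ω ι : Type*} [MeasurableSpace Ω] {μ : Measure Ω}

lemma MeasureTheory.MemLp.integrable_pow_of_le [IsFiniteMeasure μ] {f : Ω → ℝ} {k N : ℕ}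
    (hf : MemLp f N μ) (hk : k ≤ N) : Integrable (fun ω => f ω ^ k) μ := by
  have hN : Integrable (fun ω => ‖f ω‖ ^ N) μ := by
    rcases N.eq_zero_or_pos with rfl | hN
    · simp
    · exact hf.integrable_norm_pow hN.ne'
  refine (integrable_norm_iff (f := fun ω => f ω ^ k) (hf.1.pow k)).1 ?_
  simpa only [norm_pow] using integrable_norm_pow_of_le hf.1 hk hN

lemma ProbabilityTheory.IndepFun.integral_add_pow [IsFiniteMeasure μ] {S Z : Ω → ℝ}
    (h : IndepFun S Z μ) {N : ℕ} (hS : MemLp S N μ) (hZ : MemLp Z N μ) :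
    ∫ ω, (S ω + Z ω) ^ N ∂μ =
      ∑ k ∈ Finset.range (N + 1), (∫ ω, S ω ^ k ∂μ) * (∫ ω, Z ω ^ (N - k) ∂μ) * N.choose k := by
  have hpow (k : ℕ) : IndepFun (fun ω => S ω ^ k) (fun ω => Z ω ^ (N - k)) μ :=
    h.comp (measurable_id.pow_const k) (measurable_id.pow_const (N - k))
  simp_rw [add_pow]
  rw [integral_finsetSum]
  · refine Finset.sum_congr rfl fun k _ => ?_
    rw [integral_mul_const]
    congr 1
    exact (hpow k).integral_mul_eq_mul_integral (hS.1.pow k) (hZ.1.pow (N - k))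
  · intro k hk
    exact ((hpow k).integrable_mul (hS.integrable_pow_of_le (Finset.mem_range_succ_iff.1 hk))
      (hZ.integrable_pow_of_le (Nat.sub_le N k))).mul_const _

variable [IsProbabilityMeasure μ] {Z : ι → Ω → ℝ}

lemma ProbabilityTheory.iIndepFun.integral_sum_sq (hind : iIndepFun Z μ)
    (hZ : ∀ i, MemLp (Z i) 2 μ) (h0 : ∀ i, ∫ ω, Z i ω ∂μ = 0) (s : Finset ι) :
    ∫ ω, (∑ i ∈ s, Z i ω) ^ 2 ∂μ = ∑ i ∈ s, ∫ ω, Z i ω ^ 2 ∂μ := by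
  have hsum : ∫ ω, (∑ i ∈ s, Z i) ω ∂μ = 0 := by
    simp only [Finset.sum_apply]
    rw [integral_finsetSum _ fun i _ => (hZ i).integrable one_le_two]
    exact Finset.sum_eq_zero fun i _ => h0 i
  have hvar := IndepFun.variance_sum (s := s) (fun i _ => hZ i)
    (fun i _ j _ hij => hind.indepFun hij)
  rw [variance_of_integral_eq_zero (memLp_finsetSum' s fun i _ => hZ i).aemeasurable hsum] at hvar
  simp only [Finset.sum_apply] at hvar
  rw [hvar]
  exact Finset.sum_congr rfl fun i _ => variance_of_integral_eq_zero (hZ i).aemeasurable (h0 i)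

lemma ProbabilityTheory.iIndepFun.integral_sum_pow_four_le (hind : iIndepFun Z μ)
    (hmeas : ∀ i, Measurable (Z i)) (hZ : ∀ i, MemLp (Z i) 4 μ) (h0 : ∀ i, ∫ ω, Z i ω ∂μ = 0)
    (s : Finset ι) :
    ∫ ω, (∑ i ∈ s, Z i ω) ^ 4 ∂μ ≤
      ∑ i ∈ s, ∫ ω, Z i ω ^ 4 ∂μ + 3 * (∑ i ∈ s, ∫ ω, Z i ω ^ 2 ∂μ) ^ 2 := by
  classical
  have hZ2 : ∀ i, MemLp (Z i) 2 μ := fun i => (hZ i).mono_exponent (by norm_num)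
  induction s using Finset.induction_on with
  | empty => simp
  | insert a s ha ih =>
    set S : Ω → ℝ := fun ω => ∑ i ∈ s, Z i ω with hS
    have hSa : IndepFun S (Z a) μ := by
      convert hind.indepFun_finsetSum_of_notMem hmeas ha using 1
      ext ω; simp [hS]
    have hS4 : MemLp S 4 μ := by
      simpa [hS, ← Finset.sum_apply] using memLp_finsetSum' s fun i _ => hZ i
    have hS0 : ∫ ω, S ω ∂μ = 0 := by
      rw [integral_finsetSum _ fun i _ => (hZ i).integrable (by norm_num)]
      exact Finset.sum_eq_zero fun i _ => h0 i
    have hS2 : ∫ ω, S ω ^ 2 ∂μ = ∑ i ∈ s, ∫ ω, Z i ω ^ 2 ∂μ := hind.integral_sum_sq hZ2 h0 s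
    have hexp : ∫ ω, (S ω + Z a ω) ^ 4 ∂μ =
        ∫ ω, S ω ^ 4 ∂μ + 6 * (∫ ω, S ω ^ 2 ∂μ) * (∫ ω, Z a ω ^ 2 ∂μ) + ∫ ω, Z a ω ^ 4 ∂μ := by
      rw [hSa.integral_add_pow hS4 (hZ a)]
      simp only [Nat.reduceAdd, Finset.sum_range_succ, Finset.range_one, Finset.sum_singleton,
        pow_zero, integral_const, probReal_univ, smul_eq_mul, mul_one, tsub_zero, one_mul,
        Nat.choose, Nat.cast_one, pow_one, hS0, Nat.add_one_sub_one, zero_mul, add_zero,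
        Nat.cast_ofNat, Nat.reduceSub, h0 a, mul_zero, tsub_self]
      ring
    simp only [Finset.sum_insert ha, add_comm (Z a _)]
    rw [hexp, hS2]
    nlinarith [sq_nonneg (∫ ω, Z a ω ^ 2 ∂μ)]

end Moments

section Truncation

variable {α : Type*} {f : α → ℝ} {A p : ℝ}

lemma abs_truncation_sub_le (hA : 0 < A) (hp : 1 ≤ p) (x : α) :
    |truncation f A x - f x| ≤ |f x| ^ p / A ^ (p - 1) := by
  by_cases hx : f x ∈ Set.Ioc (-A) A
  · simp only [truncation, Function.comp_apply, Set.indicator_of_mem hx, id, sub_self, abs_zero]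
    positivity
  · have hAx : A ≤ |f x| := by
      simp only [Set.mem_Ioc, not_and_or, not_lt, not_le] at hx
      rcases hx with hx | hx
      · exact le_abs.2 (Or.inr (by linarith))
      · exact le_abs.2 (Or.inl hx.le)
    have hfx : 0 < |f x| := hA.trans_le hAx
    simp only [truncation, Function.comp_apply, Set.indicator_of_notMem hx, zero_sub, abs_neg]
    rw [le_div_iff₀ (by positivity)]
    calc |f x| * A ^ (p - 1) ≤ |f x| * |f x| ^ (p - 1) := by gcongr
      _ = |f x| ^ p := by rw [Real.rpow_sub_one hfx.ne', mul_div_cancel₀ _ hfx.ne']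

lemma abs_truncation_rpow_le (hA : 0 ≤ A) {q : ℝ} (hp : 0 ≤ p) (hpq : p ≤ q) (x : α) :
    |truncation f A x| ^ q ≤ A ^ (q - p) * |f x| ^ p := by
  have ht := abs_nonneg (truncation f A x)
  calc |truncation f A x| ^ q = |truncation f A x| ^ (q - p) * |truncation f A x| ^ p := by
        rw [← Real.rpow_add_of_nonneg ht (by linarith) hp, sub_add_cancel]
    _ ≤ A ^ (q - p) * |f x| ^ p := by
        have hbound : |truncation f A x| ≤ A :=
          (abs_truncation_le_bound f A x).trans (abs_of_nonneg hA).le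
        exact mul_le_mul (Real.rpow_le_rpow ht hbound (by linarith))
          (Real.rpow_le_rpow ht (abs_truncation_le_abs_self f A x) hp) (by positivity)
          (by positivity)

lemma sq_le_one_add_abs_rpow (hp : 2 ≤ p) (x : ℝ) : x ^ 2 ≤ 1 + |x| ^ p := by
  rcases le_or_gt |x| 1 with hx | hx
  · have : |x| ^ 2 ≤ 1 := pow_le_one₀ (abs_nonneg x) hx
    rw [sq_abs] at this
    linarith [Real.rpow_nonneg (abs_nonneg x) p]
  · have : |x| ^ (2 : ℝ) ≤ |x| ^ p := Real.rpow_le_rpow_of_exponent_le hx.le hp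
    rw [Real.rpow_two, sq_abs] at this
    linarith

lemma sub_pow_four_le (a b : ℝ) : (a - b) ^ 4 ≤ 8 * (a ^ 4 + b ^ 4) := by
  nlinarith [sq_nonneg (a + b), sq_nonneg (a - b), sq_nonneg (a ^ 2 - b ^ 2), sq_nonneg (a * b)]

lemma abs_rpow_four (y : ℝ) : |y| ^ (4 : ℝ) = y ^ 4 := by
  rw [Real.rpow_ofNat, Even.pow_abs ⟨2, rfl⟩]

end Truncation

section CenteredTruncation

variable {Ω : Type*} [MeasurableSpace Ω] {μ : Measure Ω} {X : Ω → ℝ} {A p : ℝ}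

variable (μ) in
noncomputable def centeredTruncation (X : Ω → ℝ) (A : ℝ) : Ω → ℝ :=
  fun ω => truncation X A ω - ∫ ω', truncation X A ω' ∂μ

lemma Measurable.centeredTruncation (hX : Measurable X) (A : ℝ) :
    Measurable (centeredTruncation μ X A) :=
  ((measurable_id.indicator measurableSet_Ioc).comp hX).sub_const _

lemma ProbabilityTheory.iIndepFun.centeredTruncation {ι : Type*} {X : ι → Ω → ℝ}
    (hind : iIndepFun X μ) (A : ℝ) : iIndepFun (fun i => centeredTruncation μ (X i) A) μ :=
  hind.comp (fun i x => Set.indicator (Set.Ioc (-A) A) id x - ∫ ω, truncation (X i) A ω ∂μ)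
    fun _ => (measurable_id.indicator measurableSet_Ioc).sub_const _

lemma memLp_centeredTruncation [IsFiniteMeasure μ] (hX : AEStronglyMeasurable X μ) (A : ℝ)
    (q : ENNReal) : MemLp (centeredTruncation μ X A) q μ :=
  hX.memLp_truncation.sub (memLp_const _)

lemma integrable_of_integrable_abs_rpow [IsFiniteMeasure μ] (hX : AEStronglyMeasurable X μ)
    (hp : 1 ≤ p) (hXp : Integrable (fun ω => |X ω| ^ p) μ) : Integrable X μ := by
  have := integrable_norm_rpow_of_le hX zero_le_one (by linarith) hp hXp
  exact (integrable_norm_iff hX).1 (by simpa only [Real.rpow_one] using this)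

lemma abs_integral_truncation_le [IsFiniteMeasure μ] (hX : AEStronglyMeasurable X μ)
    (hXp : Integrable (fun ω => |X ω| ^ p) μ) (h0 : ∫ ω, X ω ∂μ = 0) (hA : 0 < A) (hp : 1 ≤ p) :
    |∫ ω, truncation X A ω ∂μ| ≤ (∫ ω, |X ω| ^ p ∂μ) / A ^ (p - 1) := by
  have hXi := integrable_of_integrable_abs_rpow hX hp hXp
  have htX : Integrable (fun ω => truncation X A ω - X ω) μ := hX.integrable_truncation.sub hXi
  calc |∫ ω, truncation X A ω ∂μ| = |∫ ω, (truncation X A ω - X ω) ∂μ| := by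
        rw [integral_sub hX.integrable_truncation hXi, h0, sub_zero]
    _ ≤ ∫ ω, |truncation X A ω - X ω| ∂μ := abs_integral_le_integral_abs
    _ ≤ ∫ ω, |X ω| ^ p / A ^ (p - 1) ∂μ :=
        integral_mono htX.abs (hXp.div_const _) fun ω => abs_truncation_sub_le hA hp ω
    _ = (∫ ω, |X ω| ^ p ∂μ) / A ^ (p - 1) := integral_div _ _

variable [IsProbabilityMeasure μ]

lemma integral_centeredTruncation (hX : AEStronglyMeasurable X μ) (A : ℝ) :
    ∫ ω, centeredTruncation μ X A ω ∂μ = 0 := by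
  simp [centeredTruncation, integral_sub hX.integrable_truncation (integrable_const _)]

lemma integral_centeredTruncation_sq_le (hX : AEStronglyMeasurable X μ)
    (hXp : Integrable (fun ω => |X ω| ^ p) μ) (hp : 2 ≤ p) (A : ℝ) :
    ∫ ω, centeredTruncation μ X A ω ^ 2 ∂μ ≤ 1 + ∫ ω, |X ω| ^ p ∂μ := by
  unfold centeredTruncation
  rw [← variance_eq_integral hX.truncation.aemeasurable]
  calc Var[truncation X A; μ] ≤ ∫ ω, truncation X A ω ^ 2 ∂μ :=
        variance_le_expectation_sq hX.truncation
    _ ≤ ∫ ω, (1 + |X ω| ^ p) ∂μ := by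
        refine integral_mono hX.memLp_truncation.integrable_sq ((integrable_const 1).add hXp)
          fun ω => ?_
        calc truncation X A ω ^ 2 ≤ X ω ^ 2 := by
              rw [← sq_abs, ← sq_abs (X ω)]
              exact pow_le_pow_left₀ (abs_nonneg _) (abs_truncation_le_abs_self X A ω) 2
          _ ≤ 1 + |X ω| ^ p := sq_le_one_add_abs_rpow hp _
    _ = 1 + ∫ ω, |X ω| ^ p ∂μ := by
        rw [integral_add (integrable_const 1) hXp]; simp

lemma integral_centeredTruncation_pow_four_le (hX : AEStronglyMeasurable X μ)
    (hXp : Integrable (fun ω => |X ω| ^ p) μ) (h0 : ∫ ω, X ω ∂μ = 0) (hA : 0 < A)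
    (hp : 1 ≤ p) (hp4 : p ≤ 4) :
    ∫ ω, centeredTruncation μ X A ω ^ 4 ∂μ ≤ 16 * A ^ (4 - p) * ∫ ω, |X ω| ^ p ∂μ := by
  set m := ∫ ω, truncation X A ω ∂μ
  set K := ∫ ω, |X ω| ^ p ∂μ
  have hK : 0 ≤ K := integral_nonneg fun ω => by positivity
  have ht4 : Integrable (fun ω => truncation X A ω ^ 4) μ :=
    (hX.memLp_truncation (p := 4)).integrable_pow_of_le le_rfl
  have hmoment : ∫ ω, truncation X A ω ^ 4 ∂μ ≤ A ^ (4 - p) * K := by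
    rw [← integral_const_mul]
    refine integral_mono ht4 (hXp.const_mul _) fun ω => ?_
    rw [← abs_rpow_four]
    exact abs_truncation_rpow_le hA.le (by linarith) hp4 ω
  have hbias : m ^ 4 ≤ A ^ (4 - p) * K := by
    have hm : |m| ≤ K / A ^ (p - 1) := abs_integral_truncation_le hX hXp h0 hA hp
    have hmA : |m| ≤ A := by
      have := norm_integral_le_of_norm_le_const (μ := μ) (f := truncation X A) (C := A)
        (Eventually.of_forall fun ω => (abs_truncation_le_bound X A ω).trans (abs_of_pos hA).le)
      simpa using this
    have hApow : A ^ (4 - p) = A ^ 3 / A ^ (p - 1) := by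
      rw [← Real.rpow_natCast, ← Real.rpow_sub hA]; norm_num; ring_nf
    calc m ^ 4 = |m| * |m| ^ 3 := by rw [← pow_succ', Even.pow_abs ⟨2, rfl⟩]
      _ ≤ K / A ^ (p - 1) * A ^ 3 := by gcongr
      _ = A ^ (4 - p) * K := by rw [hApow]; ring
  calc ∫ ω, centeredTruncation μ X A ω ^ 4 ∂μ ≤ ∫ ω, 8 * (truncation X A ω ^ 4 + m ^ 4) ∂μ :=
        integral_mono ((memLp_centeredTruncation hX A 4).integrable_pow_of_le le_rfl)
          ((ht4.add (integrable_const _)).const_mul 8) fun ω => sub_pow_four_le _ _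
    _ = 8 * (∫ ω, truncation X A ω ^ 4 ∂μ + m ^ 4) := by
        rw [integral_const_mul, integral_add ht4 (integrable_const _)]; simp
    _ ≤ 16 * A ^ (4 - p) * K := by linarith

end CenteredTruncation

section Deviation

variable {Ω ι : Type*}

lemma setOf_abs_sum_ge_subset (X : ι → Ω → ℝ) (s : Finset ι) (A : ℝ) {r : ℝ} {m : ι → ℝ}
    (hm : |∑ i ∈ s, m i| ≤ r / 2) :
    {ω | r ≤ |∑ i ∈ s, X i ω|} ⊆
      (⋃ i ∈ s, {ω | A ≤ |X i ω|}) ∪ {ω | r / 2 ≤ |∑ i ∈ s, (truncation (X i) A ω - m i)|} := by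
  intro ω hω
  by_cases htail : ∃ i ∈ s, A ≤ |X i ω|
  · obtain ⟨i, hi, hA⟩ := htail
    exact Or.inl (Set.mem_biUnion hi hA)
  · push Not at htail
    have hsum : ∑ i ∈ s, (truncation (X i) A ω - m i) = ∑ i ∈ s, X i ω - ∑ i ∈ s, m i := by
      rw [Finset.sum_sub_distrib,
        Finset.sum_congr rfl fun i hi => truncation_eq_self (htail i hi)]
    refine Or.inr ?_
    simp only [Set.mem_ofPred_eq, hsum] at hω ⊢
    linarith [abs_sub_abs_le_abs_sub (∑ i ∈ s, X i ω) (∑ i ∈ s, m i)]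

variable [MeasurableSpace Ω] {μ : Measure Ω}

lemma measureReal_abs_ge_le_integral_rpow_div [IsFiniteMeasure μ] {f : Ω → ℝ} {a q : ℝ}
    (ha : 0 < a) (hq : 0 ≤ q) (hf : Integrable (fun ω => |f ω| ^ q) μ) :
    μ.real {ω | a ≤ |f ω|} ≤ (∫ ω, |f ω| ^ q ∂μ) / a ^ q := by
  rw [le_div_iff₀ (by positivity), mul_comm]
  calc a ^ q * μ.real {ω | a ≤ |f ω|} ≤ a ^ q * μ.real {ω | a ^ q ≤ |f ω| ^ q} := by
        have hsub : {ω | a ≤ |f ω|} ⊆ {ω | a ^ q ≤ |f ω| ^ q} :=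
          fun ω hω => Real.rpow_le_rpow ha.le hω hq
        exact mul_le_mul_of_nonneg_left (measureReal_mono hsub) (by positivity)
    _ ≤ ∫ ω, |f ω| ^ q ∂μ :=
        mul_meas_ge_le_integral_of_nonneg (ae_of_all _ fun ω => by positivity) hf _

variable [IsProbabilityMeasure μ] {X : ι → Ω → ℝ} {p K : ℝ}

lemma integral_sum_centeredTruncation_pow_four_le (hmeas : ∀ i, Measurable (X i))
    (hind : iIndepFun X μ) (hXp : ∀ i, Integrable (fun ω => |X i ω| ^ p) μ)
    (hK : ∀ i, ∫ ω, |X i ω| ^ p ∂μ ≤ K) (h0 : ∀ i, ∫ ω, X i ω ∂μ = 0) (hp : 2 ≤ p)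
    (hp4 : p ≤ 4) (s : Finset ι) {A : ℝ} (hA : 0 < A) :
    ∫ ω, (∑ i ∈ s, centeredTruncation μ (X i) A ω) ^ 4 ∂μ ≤
      s.card * (16 * A ^ (4 - p) * K) + 3 * (s.card * (1 + K)) ^ 2 := by
  have hX : ∀ i, AEStronglyMeasurable (X i) μ := fun i => (hmeas i).aestronglyMeasurable
  refine ((hind.centeredTruncation A).integral_sum_pow_four_le
    (fun i => (hmeas i).centeredTruncation A) (fun i => memLp_centeredTruncation (hX i) A 4)
    (fun i => integral_centeredTruncation (hX i) A) s).trans ?_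
  have hsq : ∑ i ∈ s, ∫ ω, centeredTruncation μ (X i) A ω ^ 2 ∂μ ≤ s.card * (1 + K) := by
    simpa using Finset.sum_le_card_nsmul s _ _ fun i _ =>
      (integral_centeredTruncation_sq_le (hX i) (hXp i) hp A).trans (by linarith [hK i])
  have hfour : ∑ i ∈ s, ∫ ω, centeredTruncation μ (X i) A ω ^ 4 ∂μ ≤
      s.card * (16 * A ^ (4 - p) * K) := by
    simpa using Finset.sum_le_card_nsmul s _ _ fun i _ =>
      (integral_centeredTruncation_pow_four_le (hX i) (hXp i) (h0 i) hA (by linarith) hp4).trans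
        (by gcongr; exact hK i)
  have hsq0 : 0 ≤ ∑ i ∈ s, ∫ ω, centeredTruncation μ (X i) A ω ^ 2 ∂μ :=
    Finset.sum_nonneg fun i _ => integral_nonneg fun ω => sq_nonneg _
  nlinarith [pow_le_pow_left₀ hsq0 hsq 2]

lemma measureReal_abs_sum_ge_le (hmeas : ∀ i, Measurable (X i)) (hind : iIndepFun X μ)
    (hXp : ∀ i, Integrable (fun ω => |X i ω| ^ p) μ) (hK : ∀ i, ∫ ω, |X i ω| ^ p ∂μ ≤ K)
    (h0 : ∀ i, ∫ ω, X i ω ∂μ = 0) (hp : 2 ≤ p) (hp4 : p ≤ 4) (s : Finset ι) {A r : ℝ}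
    (hA : 0 < A) (hr : 0 < r) (hbias : s.card * K / A ^ (p - 1) ≤ r / 2) :
    μ.real {ω | r ≤ |∑ i ∈ s, X i ω|} ≤ s.card * K / A ^ p +
      (s.card * (16 * A ^ (4 - p) * K) + 3 * (s.card * (1 + K)) ^ 2) / (r / 2) ^ 4 := by
  have hX : ∀ i, AEStronglyMeasurable (X i) μ := fun i => (hmeas i).aestronglyMeasurable
  have hm : |∑ i ∈ s, ∫ ω, truncation (X i) A ω ∂μ| ≤ r / 2 := by
    refine (Finset.abs_sum_le_sum_abs _ _).trans (le_trans ?_ hbias)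
    simpa [mul_div_assoc] using Finset.sum_le_card_nsmul s _ _ fun i _ =>
      (abs_integral_truncation_le (hX i) (hXp i) (h0 i) hA (by linarith)).trans
        (by gcongr; exact hK i)
  have htail : ∑ i ∈ s, μ.real {ω | A ≤ |X i ω|} ≤ s.card * K / A ^ p := by
    simpa [mul_div_assoc] using Finset.sum_le_card_nsmul s _ _ fun i _ =>
      (measureReal_abs_ge_le_integral_rpow_div hA (by linarith) (hXp i)).trans
        (by gcongr; exact hK i)
  have hcentral : μ.real {ω | r / 2 ≤ |∑ i ∈ s, centeredTruncation μ (X i) A ω|} ≤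
      (s.card * (16 * A ^ (4 - p) * K) + 3 * (s.card * (1 + K)) ^ 2) / (r / 2) ^ 4 := by
    have hint : Integrable (fun ω => |∑ i ∈ s, centeredTruncation μ (X i) A ω| ^ (4 : ℝ)) μ := by
      simp only [abs_rpow_four]
      exact (memLp_finsetSum s fun i _ => memLp_centeredTruncation (hX i) A 4).integrable_pow_of_le
        le_rfl
    refine (measureReal_abs_ge_le_integral_rpow_div (by positivity) (by norm_num) hint).trans ?_
    rw [Real.rpow_ofNat]
    simp only [abs_rpow_four]
    exact div_le_div_of_nonneg_right
      (integral_sum_centeredTruncation_pow_four_le hmeas hind hXp hK h0 hp hp4 s hA) (by positivity)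
  calc μ.real {ω | r ≤ |∑ i ∈ s, X i ω|}
      ≤ μ.real ((⋃ i ∈ s, {ω | A ≤ |X i ω|}) ∪
          {ω | r / 2 ≤ |∑ i ∈ s, centeredTruncation μ (X i) A ω|}) :=
        measureReal_mono (setOf_abs_sum_ge_subset X s A hm)
    _ ≤ μ.real (⋃ i ∈ s, {ω | A ≤ |X i ω|}) +
          μ.real {ω | r / 2 ≤ |∑ i ∈ s, centeredTruncation μ (X i) A ω|} :=
        measureReal_union_le _ _
    _ ≤ _ := add_le_add ((measureReal_biUnion_finset_le _ _).trans htail) hcentral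

end Deviation

lemma ProbabilityTheory.iIndepFun.exists_measureReal_abs_sum_ge_le {Ω : Type*}
    [MeasurableSpace Ω] {μ : Measure Ω} [IsProbabilityMeasure μ] {X : ℕ → Ω → ℝ} {p K : ℝ}
    (hind : iIndepFun X μ) (hmeas : ∀ i, Measurable (X i))
    (hXp : ∀ i, Integrable (fun ω => |X i ω| ^ p) μ) (hK : ∀ i, ∫ ω, |X i ω| ^ p ∂μ ≤ K)
    (h0 : ∀ i, ∫ ω, X i ω ∂μ = 0) (hp : 2 ≤ p) (hp3 : p ≤ 3) {ε : ℝ} (hε : 0 < ε) :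
    ∃ C > 0, ∀ n : ℕ, 1 ≤ n →
      μ.real {ω | ε * n ≤ |∑ i ∈ Finset.range n, X i ω|} ≤ C * (n : ℝ) ^ (1 - p) := by
  have hK0 : 0 ≤ K := (integral_nonneg fun ω => by positivity).trans (hK 0)
  refine ⟨K + 2 * K / ε + (16 * K + 3 * (1 + K) ^ 2) / (ε / 2) ^ 4, by positivity,
    fun n hn => ?_⟩
  have hn : (1 : ℝ) ≤ n := by exact_mod_cast hn
  have hn0 : (0 : ℝ) < n := by linarith
  set y := (n : ℝ) ^ p
  have hy : 0 < y := by positivity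
  have hy3 : y ≤ n ^ 3 := by
    simpa using Real.rpow_le_rpow_of_exponent_le hn hp3
  rw [Real.rpow_sub hn0, Real.rpow_one]
  by_cases hbias : (Finset.range n).card * K / (n : ℝ) ^ (p - 1) ≤ ε * n / 2
  · refine (measureReal_abs_sum_ge_le hmeas hind hXp hK h0 hp (by linarith) _ hn0
      (by positivity) hbias).trans ?_
    rw [Finset.card_range, Real.rpow_sub hn0, Real.rpow_ofNat]
    have hu : (n : ℝ) ^ 2 ≤ n / y * n ^ 4 := by
      rw [div_mul_eq_mul_div, le_div_iff₀ hy]; nlinarith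
    calc n * K / y + (n * (16 * (n ^ 4 / y) * K) + 3 * (n * (1 + K)) ^ 2) / (ε * n / 2) ^ 4
        = K * (n / y) + (16 * K * (n / y) * n ^ 4 + 3 * (1 + K) ^ 2 * n ^ 2) /
            ((ε / 2) ^ 4 * n ^ 4) := by ring
      _ ≤ K * (n / y) + (16 * K * (n / y) * n ^ 4 + 3 * (1 + K) ^ 2 * (n / y * n ^ 4)) /
            ((ε / 2) ^ 4 * n ^ 4) := by gcongr
      _ = (K + (16 * K + 3 * (1 + K) ^ 2) / (ε / 2) ^ 4) * (n / y) := by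
          field_simp
      _ ≤ _ := by gcongr; linarith [show 0 ≤ 2 * K / ε by positivity]
  -- the bias is too large only when `n ^ (1 - p)` is bounded below, so `P ≤ 1` suffices
  · push Not at hbias
    rw [Finset.card_range, Real.rpow_sub_one hn0.ne'] at hbias
    calc μ.real {ω | ε * n ≤ |∑ i ∈ Finset.range n, X i ω|} ≤ 1 := measureReal_le_one
      _ ≤ 2 * K / ε * (n / y) := by
          rw [div_div_eq_mul_div, lt_div_iff₀ hy] at hbias
          rw [div_mul_div_comm, le_div_iff₀ (by positivity)]
          nlinarith
      _ ≤ _ := by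
          gcongr
          linarith [show 0 ≤ (16 * K + 3 * (1 + K) ^ 2) / (ε / 2) ^ 4 by positivity]

/-- For an i.i.d. centered sequence `(X n)` with `E[|X|^(2+ε)] < ∞`, for every
`ε̄ > 0` there are `c > 0`, `δ > 0` with `P(|∑_{i=1}^n X i| ≥ ε̄ n) ≤ c n^{-(1+δ)}` for all
`n ≥ 1`. -/
theorem stmt_1 {Ω : Type*} [MeasurableSpace Ω] (μ : Measure Ω) [IsProbabilityMeasure μ]
    (X : ℕ → Ω → ℝ) (hmeas : ∀ n, Measurable (X n))
    (hindep : iIndepFun X μ)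
    (hident : ∀ n, μ.map (X n) = μ.map (X 0))
    (ε : ℝ) (hε : 0 < ε)
    (hmom : Integrable (fun ω => |X 0 ω| ^ (2 + ε)) μ)
    (hmean : ∫ ω, X 0 ω ∂μ = 0)
    (εb : ℝ) (hεb : 0 < εb) :
    ∃ c > (0:ℝ), ∃ δ > (0:ℝ), ∀ n : ℕ, 1 ≤ n →
      (μ {ω | εb * n ≤ |∑ i ∈ Finset.range n, X i ω|}).toReal ≤ c * (n : ℝ) ^ (-(1 + δ)) := by
  set δ := min ε 1
  have hδ : 0 < δ := lt_min hε one_pos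
  have hδε : δ ≤ ε := min_le_left _ _
  have hδ1 : δ ≤ 1 := min_le_right _ _
  have hdistrib (i : ℕ) : IdentDistrib (X i) (X 0) μ μ :=
    ⟨(hmeas i).aemeasurable, (hmeas 0).aemeasurable, hident i⟩
  have hmom' : Integrable (fun ω => |X 0 ω| ^ (2 + δ)) μ := by
    have := integrable_norm_rpow_of_le (hmeas 0).aestronglyMeasurable (p := 2 + δ) (q := 2 + ε)
      (by linarith) (by linarith) (by linarith) (by simpa only [Real.norm_eq_abs] using hmom)
    simpa only [Real.norm_eq_abs] using this
  have hpow (i : ℕ) :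
      IdentDistrib (fun ω => |X i ω| ^ (2 + δ)) (fun ω => |X 0 ω| ^ (2 + δ)) μ μ :=
    (hdistrib i).comp ((Real.continuous_rpow_const (by positivity)).measurable.comp measurable_abs)
  obtain ⟨c, hc, hbound⟩ := hindep.exists_measureReal_abs_sum_ge_le hmeas
    (fun i => (hpow i).integrable_iff.2 hmom') (fun i => (hpow i).integral_eq.le)
    (fun i => (hdistrib i).integral_eq.trans hmean) (by linarith) (by linarith) hεb
  refine ⟨c, hc, δ, hδ, fun n hn => ?_⟩
  rw [show -(1 + δ) = 1 - (2 + δ) by ring]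
  exact hbound n hn
end

section
/- For every ϑ ∈ ℝ and every a, b > 0 there exists a constant c > 0, depending only on a and b, with the following property: for every measure m on V such that L_m(ϑ−a) < ∞, L_m(ϑ+b) < ∞ and 0 < L_m(ϑ) < ∞, one has |κ_m′(ϑ)|⁸ ≤ c · (e^{κ_m(ϑ−a)−κ_m(ϑ)} + e^{κ_m(ϑ+b)−κ_m(ϑ)}) and (∫ Σ_{i=1}^{N} ζ_i⁸ e^{−ϑζ_i} dm) / L_m(ϑ) ≤ c · (e^{κ_m(ϑ−a)−κ_m(ϑ)} + e^{κ_m(ϑ+b)−κ_m(ϑ)}). -/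
/-!
Push `m` forward to the measure `μ = ∫ ∑_{i<N} e^{-ϑ ζ_i} δ_{ζ_i} dm` on `ℝ`. Then `L_m(θ)` is
the moment generating function of `μ` at `ϑ - θ`, so `κ_m(θ)` is its cumulant generating function
there and `-κ_m'(ϑ)` is the mean `s` of `μ / μ(ℝ)`. Both bounds follow from the elementary
`|x|ⁿ ≤ n!/aⁿ e^{ax} + n!/bⁿ e^{-bx}`: integrated against `μ` it bounds the `n`-th moment, and
evaluated at `x = s` it bounds `|κ_m'(ϑ)|ⁿ` once Jensen's inequality
`e^{ts} ≤ ∫ e^{tx} dμ / μ(ℝ) = e^{κ_m(ϑ - t) - κ_m(ϑ)}` is applied for `t = a` and `t = -b`.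
-/

open MeasureTheory

noncomputable section

/-- The space `V = ℕ × ℝ^ℕ`; an element is `(N, ζ)`. -/
abbrev V : Type := ℕ × (ℕ → ℝ)

/-- `L m θ = ∫ ∑_{i<N} e^{-θ ζ_i} dm ∈ [0,∞]`. -/
def L (m : Measure V) (θ : ℝ) : ENNReal :=
  ∫⁻ p, ENNReal.ofReal (∑ i ∈ Finset.range p.1, Real.exp (-θ * p.2 i)) ∂m

/-- `κ_m(θ) = log L_m(θ)`. -/
def kap (m : Measure V) (θ : ℝ) : ℝ := Real.log (L m θ).toReal

open Finset ProbabilityTheory Real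

open scoped Nat

lemma pow_le_factorial_div_pow_mul_exp {a x : ℝ} (ha : 0 < a) (hx : 0 ≤ x) (n : ℕ) :
    x ^ n ≤ n ! / a ^ n * exp (a * x) := by
  have h := pow_div_factorial_le_exp (a * x) (by positivity) n
  rw [div_le_iff₀ (by positivity), mul_pow] at h
  rw [div_mul_eq_mul_div, le_div_iff₀ (by positivity)]
  linarith

lemma abs_pow_le_exp_add_exp {a b : ℝ} (ha : 0 < a) (hb : 0 < b) (n : ℕ) (x : ℝ) :
    |x| ^ n ≤ n ! / a ^ n * exp (a * x) + n ! / b ^ n * exp (-b * x) := by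
  have hA : 0 ≤ n ! / a ^ n * exp (a * x) := by positivity
  have hB : 0 ≤ n ! / b ^ n * exp (-b * x) := by positivity
  rcases le_total 0 x with hx | hx
  · have := pow_le_factorial_div_pow_mul_exp ha hx n
    rw [abs_of_nonneg hx]
    linarith
  · have := pow_le_factorial_div_pow_mul_exp hb (neg_nonneg.mpr hx) n
    rw [mul_neg, ← neg_mul] at this
    rw [abs_of_nonpos hx]
    linarith

section Moments

variable {Ω : Type*} [MeasurableSpace Ω] {μ : Measure Ω} {X : Ω → ℝ} {a b : ℝ}

lemma zero_mem_interior_integrableExpSet (ha : 0 < a) (hb : 0 < b)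
    (hA : Integrable (fun ω ↦ exp (a * X ω)) μ) (hB : Integrable (fun ω ↦ exp (-b * X ω)) μ) :
    0 ∈ interior (integrableExpSet X μ) := by
  rw [mem_interior_iff_mem_nhds]
  filter_upwards [Ioo_mem_nhds (neg_lt_zero.mpr hb) ha] with t ht
  exact integrable_exp_mul_of_le_of_le hB hA ht.1.le ht.2.le

lemma exp_mul_integral_div_le_mgf_div [IsFiniteMeasure μ] [NeZero μ] {t : ℝ}
    (hX : Integrable X μ) (ht : Integrable (fun ω ↦ exp (t * X ω)) μ) :
    exp (t * (μ[X] / μ.real Set.univ)) ≤ mgf X μ t / μ.real Set.univ := by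
  have h := convexOn_exp.map_average_le continuousOn_exp isClosed_univ
    (ae_of_all _ fun _ ↦ Set.mem_univ _) (hX.const_mul t) ht
  simp only [average_eq, integral_const_mul, smul_eq_mul] at h
  rwa [mgf, div_eq_inv_mul, div_eq_inv_mul, mul_left_comm]

lemma abs_integral_div_pow_le [IsFiniteMeasure μ] [NeZero μ] (ha : 0 < a) (hb : 0 < b)
    (hA : Integrable (fun ω ↦ exp (a * X ω)) μ) (hB : Integrable (fun ω ↦ exp (-b * X ω)) μ)
    (n : ℕ) :
    |μ[X] / μ.real Set.univ| ^ n
      ≤ n ! / a ^ n * (mgf X μ a / μ.real Set.univ)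
        + n ! / b ^ n * (mgf X μ (-b) / μ.real Set.univ) := by
  have hX := integrable_of_mem_interior_integrableExpSet
    (zero_mem_interior_integrableExpSet ha hb hA hB)
  refine (abs_pow_le_exp_add_exp ha hb n _).trans (add_le_add ?_ ?_) <;> gcongr
  · exact exp_mul_integral_div_le_mgf_div hX hA
  · exact exp_mul_integral_div_le_mgf_div hX hB

lemma lintegral_ofReal_pow_le (ha : 0 < a) (hb : 0 < b)
    (hA : Integrable (fun ω ↦ exp (a * X ω)) μ) (hB : Integrable (fun ω ↦ exp (-b * X ω)) μ)
    (n : ℕ) :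
    ∫⁻ ω, ENNReal.ofReal (X ω ^ n) ∂μ
      ≤ ENNReal.ofReal (n ! / a ^ n * mgf X μ a + n ! / b ^ n * mgf X μ (-b)) := by
  have hbound : Integrable
      (fun ω ↦ n ! / a ^ n * exp (a * X ω) + n ! / b ^ n * exp (-b * X ω)) μ :=
    (hA.const_mul _).add (hB.const_mul _)
  calc ∫⁻ ω, ENNReal.ofReal (X ω ^ n) ∂μ
      ≤ ∫⁻ ω, ENNReal.ofReal (n ! / a ^ n * exp (a * X ω) + n ! / b ^ n * exp (-b * X ω)) ∂μ :=
        lintegral_mono fun ω ↦ ENNReal.ofReal_le_ofReal <| (le_abs_self _).trans <|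
          (abs_pow (X ω) n).trans_le (abs_pow_le_exp_add_exp ha hb n _)
    _ = ENNReal.ofReal (n ! / a ^ n * mgf X μ a + n ! / b ^ n * mgf X μ (-b)) := by
        rw [← ofReal_integral_eq_lintegral_ofReal hbound (ae_of_all _ fun ω ↦ by positivity),
          integral_add (hA.const_mul _) (hB.const_mul _), integral_const_mul, integral_const_mul,
          mgf, mgf]

end Moments

/-- The measure `A ↦ ∫ ∑_{i<N} e^{-ϑ ζ_i} 1_A(ζ_i) dm(N, ζ)` on `ℝ`: its moment generating
function at `ϑ - θ` is `L m θ`. -/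
def tiltedMeasure (m : Measure V) (ϑ : ℝ) : Measure ℝ :=
  Measure.sum fun i : ℕ ↦
    Measure.map (fun p ↦ p.2 i)
      ((m.restrict {p | i < p.1}).withDensity fun p ↦ ENNReal.ofReal (exp (-ϑ * p.2 i)))

section Tilted

variable (m : Measure V) (ϑ : ℝ)

lemma lintegral_tiltedMeasure {g : ℝ → ENNReal} (hg : Measurable g) :
    ∫⁻ x, g x ∂tiltedMeasure m ϑ
      = ∫⁻ p, ∑ i ∈ range p.1, ENNReal.ofReal (exp (-ϑ * p.2 i)) * g (p.2 i) ∂m := by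
  have hζ (i : ℕ) : Measurable fun p : V ↦ p.2 i := (measurable_pi_apply i).comp measurable_snd
  have hdens (i : ℕ) : Measurable fun p : V ↦ ENNReal.ofReal (exp (-ϑ * p.2 i)) :=
    (measurable_exp.comp ((hζ i).const_mul _)).ennreal_ofReal
  have hset (i : ℕ) : MeasurableSet {p : V | i < p.1} :=
    measurable_fst (MeasurableSet.of_discrete (s := {n : ℕ | i < n}))
  have hterm (i : ℕ) : Measurable fun p : V ↦ ENNReal.ofReal (exp (-ϑ * p.2 i)) * g (p.2 i) :=
    (hdens i).mul (hg.comp (hζ i))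
  have hsummand (i : ℕ) :
      ∫⁻ x, g x ∂(Measure.map (fun p ↦ p.2 i) ((m.restrict {p | i < p.1}).withDensity
          fun p ↦ ENNReal.ofReal (exp (-ϑ * p.2 i))))
        = ∫⁻ p, {p : V | i < p.1}.indicator
            (fun p ↦ ENNReal.ofReal (exp (-ϑ * p.2 i)) * g (p.2 i)) p ∂m := by
    rw [lintegral_map hg (hζ i), lintegral_withDensity_eq_lintegral_mul _ (hdens i)
      (show Measurable fun p : V ↦ g (p.2 i) from hg.comp (hζ i)), ← lintegral_indicator (hset i)]
    rfl
  rw [tiltedMeasure, lintegral_sum_measure, tsum_congr hsummand,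
    ← lintegral_tsum fun i ↦ ((hterm i).indicator (hset i)).aemeasurable]
  refine lintegral_congr fun p ↦ ?_
  rw [tsum_eq_sum (s := range p.1) fun i hi ↦ Set.indicator_of_notMem (by simpa using hi) _]
  exact sum_congr rfl fun i hi ↦
    Set.indicator_of_mem (show p ∈ {q : V | i < q.1} from mem_range.mp hi) _

lemma lintegral_ofReal_sum_mul_exp_eq {f : ℝ → ℝ} (hf : Measurable f) (hf₀ : ∀ x, 0 ≤ f x) :
    ∫⁻ p, ENNReal.ofReal (∑ i ∈ range p.1, f (p.2 i) * exp (-ϑ * p.2 i)) ∂m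
      = ∫⁻ x, ENNReal.ofReal (f x) ∂tiltedMeasure m ϑ := by
  rw [lintegral_tiltedMeasure m ϑ hf.ennreal_ofReal]
  refine lintegral_congr fun p ↦ ?_
  rw [ENNReal.ofReal_sum_of_nonneg fun i _ ↦ mul_nonneg (hf₀ _) (exp_pos _).le]
  exact sum_congr rfl fun i _ ↦ by rw [mul_comm, ENNReal.ofReal_mul (exp_pos _).le]

lemma L_eq_lintegral_tiltedMeasure (θ : ℝ) :
    L m θ = ∫⁻ x, ENNReal.ofReal (exp ((ϑ - θ) * x)) ∂tiltedMeasure m ϑ := by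
  rw [← lintegral_ofReal_sum_mul_exp_eq m ϑ (by fun_prop) fun x ↦ (exp_pos _).le, L]
  refine lintegral_congr fun p ↦ congrArg ENNReal.ofReal <| sum_congr rfl fun i _ ↦ ?_
  rw [← exp_add]
  ring_nf

lemma tiltedMeasure_univ : tiltedMeasure m ϑ Set.univ = L m ϑ := by
  simp [L_eq_lintegral_tiltedMeasure m ϑ ϑ]

lemma integrable_exp_mul_tiltedMeasure {t : ℝ} (h : L m (ϑ - t) < ⊤) :
    Integrable (fun x ↦ exp (t * x)) (tiltedMeasure m ϑ) := by
  rw [← lintegral_ofReal_ne_top_iff_integrable (by fun_prop) (ae_of_all _ fun x ↦ (exp_pos _).le)]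
  rw [L_eq_lintegral_tiltedMeasure m ϑ, sub_sub_cancel] at h
  exact h.ne

lemma integrable_exp_neg_mul_tiltedMeasure {t : ℝ} (h : L m (ϑ + t) < ⊤) :
    Integrable (fun x ↦ exp (-t * x)) (tiltedMeasure m ϑ) :=
  integrable_exp_mul_tiltedMeasure m ϑ (by rwa [sub_neg_eq_add])

lemma kap_eq_cgf (θ : ℝ) : kap m θ = cgf id (tiltedMeasure m ϑ) (ϑ - θ) := by
  rw [kap, cgf, mgf, L_eq_lintegral_tiltedMeasure m ϑ θ, ← integral_eq_lintegral_of_nonneg_ae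
    (ae_of_all _ fun x ↦ (exp_pos _).le) (by fun_prop)]
  rfl

end Tilted

section Kap

variable {m : Measure V} {ϑ : ℝ}

lemma isFiniteMeasure_tiltedMeasure (h : L m ϑ < ⊤) : IsFiniteMeasure (tiltedMeasure m ϑ) :=
  ⟨by rwa [tiltedMeasure_univ]⟩

lemma neZero_tiltedMeasure (h : 0 < L m ϑ) : NeZero (tiltedMeasure m ϑ) :=
  ⟨fun h₀ ↦ by simp [← tiltedMeasure_univ, h₀] at h⟩

lemma exp_kap_sub_kap {θ : ℝ} (hθ : L m θ < ⊤) (h₀ : 0 < L m ϑ) (hϑ : L m ϑ < ⊤) :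
    exp (kap m θ - kap m ϑ)
      = mgf id (tiltedMeasure m ϑ) (ϑ - θ) / (tiltedMeasure m ϑ).real Set.univ := by
  have := neZero_tiltedMeasure h₀
  rw [kap_eq_cgf m ϑ, kap_eq_cgf m ϑ, sub_self, exp_sub,
    exp_cgf (X := id) (integrable_exp_mul_tiltedMeasure m ϑ (by rwa [sub_sub_cancel])),
    exp_cgf (X := id) (integrable_exp_mul_tiltedMeasure m ϑ (by rwa [sub_zero])), mgf_zero']

lemma deriv_kap {a b : ℝ} (ha : 0 < a) (hb : 0 < b) (hLa : L m (ϑ - a) < ⊤)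
    (hLb : L m (ϑ + b) < ⊤) :
    deriv (kap m) ϑ
      = -((tiltedMeasure m ϑ)[id] / (tiltedMeasure m ϑ).real Set.univ) := by
  have hA := integrable_exp_mul_tiltedMeasure m ϑ hLa
  have hB := integrable_exp_neg_mul_tiltedMeasure m ϑ hLb
  rw [show kap m = fun θ ↦ cgf id (tiltedMeasure m ϑ) (ϑ - θ) from funext (kap_eq_cgf m ϑ),
    deriv_comp_const_sub, sub_self,
    deriv_cgf_zero (zero_mem_interior_integrableExpSet (X := id) ha hb hA hB)]

variable {a b : ℝ} (ha : 0 < a) (hb : 0 < b) (hLa : L m (ϑ - a) < ⊤) (hLb : L m (ϑ + b) < ⊤)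
  (h₀ : 0 < L m ϑ) (hϑ : L m ϑ < ⊤)
include ha hb hLa hLb h₀ hϑ

lemma abs_deriv_kap_pow_le (n : ℕ) :
    |deriv (kap m) ϑ| ^ n
      ≤ n ! / a ^ n * exp (kap m (ϑ - a) - kap m ϑ)
        + n ! / b ^ n * exp (kap m (ϑ + b) - kap m ϑ) := by
  have := isFiniteMeasure_tiltedMeasure hϑ
  have := neZero_tiltedMeasure h₀
  have hA := integrable_exp_mul_tiltedMeasure m ϑ hLa
  have hB := integrable_exp_neg_mul_tiltedMeasure m ϑ hLb
  rw [deriv_kap ha hb hLa hLb, abs_neg, exp_kap_sub_kap hLa h₀ hϑ, exp_kap_sub_kap hLb h₀ hϑ,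
    sub_sub_cancel, sub_add_cancel_left]
  exact abs_integral_div_pow_le (X := id) ha hb hA hB n

lemma lintegral_sum_pow_mul_exp_div_L_le {n : ℕ} (hn : Even n) :
    (∫⁻ p, ENNReal.ofReal (∑ i ∈ range p.1, p.2 i ^ n * exp (-ϑ * p.2 i)) ∂m) / L m ϑ
      ≤ ENNReal.ofReal (n ! / a ^ n * exp (kap m (ϑ - a) - kap m ϑ)
        + n ! / b ^ n * exp (kap m (ϑ + b) - kap m ϑ)) := by
  have := isFiniteMeasure_tiltedMeasure hϑ
  have := neZero_tiltedMeasure h₀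
  have hA := integrable_exp_mul_tiltedMeasure m ϑ hLa
  have hB := integrable_exp_neg_mul_tiltedMeasure m ϑ hLb
  rw [lintegral_ofReal_sum_mul_exp_eq m ϑ (f := (· ^ n)) (by fun_prop) hn.pow_nonneg,
    ← tiltedMeasure_univ m ϑ, exp_kap_sub_kap hLa h₀ hϑ, exp_kap_sub_kap hLb h₀ hϑ,
    sub_sub_cancel, sub_add_cancel_left]
  refine ENNReal.div_le_of_le_mul ((lintegral_ofReal_pow_le (X := id) ha hb hA hB n).trans_eq ?_)
  rw [← ofReal_measureReal, ← ENNReal.ofReal_mul' measureReal_nonneg]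
  have hT : (tiltedMeasure m ϑ).real Set.univ ≠ 0 := measureReal_univ_ne_zero
  congr 1
  field_simp

end Kap

/-- for all `a, b > 0` there is a constant `c > 0` depending only on `a, b`
such that for every `ϑ` and every measure `m` with `L_m(ϑ-a), L_m(ϑ+b) < ∞` and
`0 < L_m(ϑ) < ∞`, both `|κ_m'(ϑ)|⁸` and the tilted eighth moment are bounded by
`c (e^{κ(ϑ-a)-κ(ϑ)} + e^{κ(ϑ+b)-κ(ϑ)})`. -/
theorem stmt_10 (a b : ℝ) (ha : 0 < a) (hb : 0 < b) :
    ∃ c > (0:ℝ), ∀ (ϑ : ℝ) (m : Measure V),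
      L m (ϑ - a) < ⊤ → L m (ϑ + b) < ⊤ → 0 < L m ϑ → L m ϑ < ⊤ →
      |deriv (kap m) ϑ| ^ 8
        ≤ c * (Real.exp (kap m (ϑ - a) - kap m ϑ) + Real.exp (kap m (ϑ + b) - kap m ϑ)) ∧
      (∫⁻ p, ENNReal.ofReal (∑ i ∈ Finset.range p.1,
            (p.2 i) ^ 8 * Real.exp (-ϑ * p.2 i)) ∂m) / L m ϑ
        ≤ ENNReal.ofReal (c * (Real.exp (kap m (ϑ - a) - kap m ϑ)
            + Real.exp (kap m (ϑ + b) - kap m ϑ))) := by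
  have hC (x y : ℝ) (hx : 0 ≤ x) (hy : 0 ≤ y) :
      8 ! / a ^ 8 * x + 8 ! / b ^ 8 * y ≤ (8 ! / a ^ 8 + 8 ! / b ^ 8) * (x + y) := by
    nlinarith [mul_nonneg (by positivity : (0 : ℝ) ≤ 8 ! / a ^ 8) hy,
      mul_nonneg (by positivity : (0 : ℝ) ≤ 8 ! / b ^ 8) hx]
  refine ⟨8 ! / a ^ 8 + 8 ! / b ^ 8, by positivity, fun ϑ m hLa hLb h₀ hϑ ↦ ⟨?_, ?_⟩⟩
  · exact (abs_deriv_kap_pow_le ha hb hLa hLb h₀ hϑ 8).trans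
      (hC _ _ (exp_pos _).le (exp_pos _).le)
  · exact (lintegral_sum_pow_mul_exp_div_L_le ha hb hLa hLb h₀ hϑ (by decide)).trans
      (ENNReal.ofReal_le_ofReal (hC _ _ (exp_pos _).le (exp_pos _).le))

end
end

section
/- Let m be a probability measure on V, let ϑ, λ, β > 0 and A > 0, and set v₁ := λ/(ϑ+λ). Then ∫ 1_{{N > A}} Σ_{i=1}^{N} e^{−ϑζ_i} dm(N,ζ) ≤ A^{−βv₁} · (∫ N^{1+β} dm)^{v₁} · (∫ Σ_{i=1}^{N} e^{−(ϑ+λ)ζ_i} dm)^{1−v₁}, where the right-hand side is interpreted as +∞ if either integral there is infinite. -/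
open MeasureTheory ENNReal Finset

/-!
Since `ϑ = (1 - v₁)(ϑ + λ)`, Hölder's inequality for the sum over `i < N` with exponents
`1/v₁, 1/(1 - v₁)` gives `∑ e^{-ϑζ_i} ≤ N^{v₁} (∑ e^{-(ϑ+λ)ζ_i})^{1-v₁}`,
and on `{N > A}` we have `N^{v₁} ≤ A^{-βv₁} (N^{1+β})^{v₁}`.
Integrating and applying Hölder in `m` with the same exponents gives the bound.
-/

theorem ENNReal.sum_rpow_le_card_rpow_mul_rpow_sum {ι : Type*} (s : Finset ι)
    (x : ι → ℝ≥0∞) {p q : ℝ} (hp : 0 < p) (hq : 0 < q) (hpq : p + q = 1) :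
    ∑ i ∈ s, x i ^ q ≤ (#s : ℝ≥0∞) ^ p * (∑ i ∈ s, x i) ^ q :=
  calc ∑ i ∈ s, x i ^ q = ∑ i ∈ s, 1 * x i ^ q := by simp only [one_mul]
    _ ≤ (∑ _i ∈ s, (1 : ℝ≥0∞) ^ (1 / p)) ^ (1 / (1 / p))
          * (∑ i ∈ s, (x i ^ q) ^ (1 / q)) ^ (1 / (1 / q)) :=
      ENNReal.inner_le_Lp_mul_Lq s _ _ (Real.holderConjugate_one_div hp hq hpq)
    _ = (#s : ℝ≥0∞) ^ p * (∑ i ∈ s, x i) ^ q := by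
      simp [← ENNReal.rpow_mul, hq.ne']

theorem ENNReal.ofReal_sum_exp_le {ι : Type*} (s : Finset ι) (ζ : ι → ℝ) {v a b : ℝ}
    (hv₀ : 0 < v) (hv₁ : v < 1) (hab : (1 - v) * b = a) :
    ENNReal.ofReal (∑ i ∈ s, Real.exp (-a * ζ i))
      ≤ (#s : ℝ≥0∞) ^ v * ENNReal.ofReal (∑ i ∈ s, Real.exp (-b * ζ i)) ^ (1 - v) := by
  subst hab
  have hexp : ∀ i ∈ s, ENNReal.ofReal (Real.exp (-((1 - v) * b) * ζ i))
      = ENNReal.ofReal (Real.exp (-b * ζ i)) ^ (1 - v) := fun i _ => by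
    rw [ENNReal.ofReal_rpow_of_pos (Real.exp_pos _), ← Real.exp_mul]
    ring_nf
  rw [ENNReal.ofReal_sum_of_nonneg fun i _ => (Real.exp_pos _).le, sum_congr rfl hexp,
    ENNReal.ofReal_sum_of_nonneg fun i _ => (Real.exp_pos _).le]
  exact ENNReal.sum_rpow_le_card_rpow_mul_rpow_sum s _ hv₀ (by linarith) (by ring)

theorem ENNReal.rpow_le_rpow_neg_mul_rpow_add {a x : ℝ≥0∞} (ha₀ : a ≠ 0) (ha : a ≠ ⊤)
    (hax : a ≤ x) {s t : ℝ} (hs : 0 ≤ s) (ht : 0 ≤ t) :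
    x ^ s ≤ a ^ (-t) * x ^ (s + t) := by
  have hone : 1 ≤ a ^ (-t) * x ^ t :=
    calc 1 = (a ^ t)⁻¹ * a ^ t :=
          (ENNReal.inv_mul_cancel (ENNReal.rpow_pos (pos_iff_ne_zero.2 ha₀) ha).ne'
            (ENNReal.rpow_ne_top_of_nonneg ht ha)).symm
      _ ≤ a ^ (-t) * x ^ t := by rw [ENNReal.rpow_neg]; gcongr
  calc x ^ s = 1 * x ^ s := (one_mul _).symm
    _ ≤ a ^ (-t) * x ^ t * x ^ s := by gcongr
    _ = a ^ (-t) * x ^ (s + t) := by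
      rw [ENNReal.rpow_add_of_nonneg _ _ hs ht, mul_assoc, mul_comm (x ^ t)]

theorem ENNReal.ofReal_ite_sum_exp_le {A β v a b : ℝ} (hA : 0 < A) (hβ : 0 ≤ β)
    (hv₀ : 0 < v) (hv₁ : v < 1) (hab : (1 - v) * b = a) (N : ℕ) (ζ : ℕ → ℝ) :
    ENNReal.ofReal (if A < (N : ℝ) then ∑ i ∈ range N, Real.exp (-a * ζ i) else 0)
      ≤ ENNReal.ofReal (A ^ (-(β * v))) * (((N : ℝ≥0∞) ^ (1 + β)) ^ v
          * ENNReal.ofReal (∑ i ∈ range N, Real.exp (-b * ζ i)) ^ (1 - v)) := by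
  split_ifs with hN
  · have hAN : ENNReal.ofReal A ≤ N :=
      (ENNReal.ofReal_le_ofReal hN.le).trans_eq (ENNReal.ofReal_natCast N)
    refine (ENNReal.ofReal_sum_exp_le (range N) ζ hv₀ hv₁ hab).trans ?_
    rw [card_range]
    calc (N : ℝ≥0∞) ^ v * _
        ≤ ENNReal.ofReal A ^ (-(β * v)) * (N : ℝ≥0∞) ^ (v + β * v) * _ := by
          gcongr
          exact ENNReal.rpow_le_rpow_neg_mul_rpow_add (by simpa using hA) ENNReal.ofReal_ne_top
            hAN hv₀.le (by positivity)
      _ = _ := by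
          rw [ENNReal.ofReal_rpow_of_pos hA, ← ENNReal.rpow_mul, mul_assoc]
          ring_nf
  · simp

theorem stmt_12_general (m : Measure (ℕ × (ℕ → ℝ)))
    (ϑ lam β A : ℝ) (hϑ : 0 < ϑ) (hlam : 0 < lam) (hβ : 0 < β) (hA : 0 < A) :
    (∫⁻ p, ENNReal.ofReal
        (if A < (p.1 : ℝ) then ∑ i ∈ Finset.range p.1, Real.exp (-ϑ * p.2 i) else 0) ∂m)
      ≤ ENNReal.ofReal (A ^ (-(β * (lam / (ϑ + lam)))))
        * (∫⁻ p, (p.1 : ENNReal) ^ ((1:ℝ) + β) ∂m) ^ (lam / (ϑ + lam))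
        * (∫⁻ p, ENNReal.ofReal
            (∑ i ∈ Finset.range p.1, Real.exp (-(ϑ + lam) * p.2 i)) ∂m)
          ^ (1 - lam / (ϑ + lam)) := by
  set v := lam / (ϑ + lam)
  have hv₀ : 0 < v := by positivity
  have hv₁ : v < 1 := (div_lt_one (by positivity)).2 (by linarith)
  have hϑ_eq : (1 - v) * (ϑ + lam) = ϑ := by
    simp only [v]; field_simp; ring
  have hpow : AEMeasurable (fun p : ℕ × (ℕ → ℝ) => (p.1 : ℝ≥0∞) ^ (1 + β)) m := by
    fun_prop
  have hsum : AEMeasurable (fun p : ℕ × (ℕ → ℝ) =>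
      ENNReal.ofReal (∑ i ∈ range p.1, Real.exp (-(ϑ + lam) * p.2 i))) m :=
    (measurable_from_prod_countable_right fun N => by dsimp only; fun_prop).aemeasurable
  calc _ ≤ ∫⁻ p, ENNReal.ofReal (A ^ (-(β * v))) * (((p.1 : ℝ≥0∞) ^ (1 + β)) ^ v
          * ENNReal.ofReal (∑ i ∈ range p.1, Real.exp (-(ϑ + lam) * p.2 i)) ^ (1 - v)) ∂m :=
        lintegral_mono fun p =>
          ENNReal.ofReal_ite_sum_exp_le hA hβ.le hv₀ hv₁ hϑ_eq p.1 p.2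
    _ = ENNReal.ofReal (A ^ (-(β * v))) * ∫⁻ p, ((p.1 : ℝ≥0∞) ^ (1 + β)) ^ v
          * ENNReal.ofReal (∑ i ∈ range p.1, Real.exp (-(ϑ + lam) * p.2 i)) ^ (1 - v) ∂m :=
        lintegral_const_mul' _ _ ENNReal.ofReal_ne_top
    _ ≤ _ := by
      rw [mul_assoc]
      gcongr
      exact ENNReal.lintegral_mul_norm_pow_le hpow hsum hv₀.le (by linarith) (by ring)

/-- for a probability measure `m` on `V = ℕ × ℝ^ℕ`, `ϑ, λ, β, A > 0` and
`v₁ = λ/(ϑ+λ)`,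
`∫ 1_{N>A} ∑_{i<N} e^{-ϑζ_i} dm ≤ A^{-βv₁} (∫ N^{1+β} dm)^{v₁} (∫ ∑_{i<N} e^{-(ϑ+λ)ζ_i} dm)^{1-v₁}`. -/
theorem stmt_12 (m : Measure (ℕ × (ℕ → ℝ))) [IsProbabilityMeasure m]
    (ϑ lam β A : ℝ) (hϑ : 0 < ϑ) (hlam : 0 < lam) (hβ : 0 < β) (hA : 0 < A) :
    (∫⁻ p, ENNReal.ofReal
        (if A < (p.1 : ℝ) then ∑ i ∈ Finset.range p.1, Real.exp (-ϑ * p.2 i) else 0) ∂m)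
      ≤ ENNReal.ofReal (A ^ (-(β * (lam / (ϑ + lam)))))
        * (∫⁻ p, (p.1 : ENNReal) ^ ((1:ℝ) + β) ∂m) ^ (lam / (ϑ + lam))
        * (∫⁻ p, ENNReal.ofReal
            (∑ i ∈ Finset.range p.1, Real.exp (-(ϑ + lam) * p.2 i)) ∂m)
          ^ (1 - lam / (ϑ + lam)) :=
  stmt_12_general m ϑ lam β A hϑ hlam hβ hA
end

section
/- Let m be a probability measure on V and ϑ > 0 such that L_m(θ) ∈ (0, ∞) for all θ in an open interval containing ϑ, and suppose κ_m(ϑ) = ϑ · κ_m′(ϑ). Then ∫ Σ_{i=1}^{N} 1_{{ϑζ_i + κ_m(ϑ) ≤ 0}} dm(N,ζ) > 0; in particular m({(N, ζ) ∈ V : ∃ 1 ≤ i ≤ N with ϑζ_i + κ_m(ϑ) ≤ 0}) > 0. -/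
open MeasureTheory

noncomputable section

/-!
Let `ν` be the intensity measure of `m`, `ν(A) = ∫ #{i < N : ζ_i ∈ A} dm`. Then `L_m` is the
Laplace transform of `ν`, so `κ_m` is the cumulant generating function of `x ↦ -x` under `ν`, and
`κ_m'(ϑ)` is the mean of `-x` under the exponentially tilted probability measure
`e^{-ϑx} ν(dx) / L_m(ϑ)`. If `ϑx + κ_m(ϑ) > 0` for `ν`-a.e. `x`, i.e. `-x < κ_m(ϑ)/ϑ`, that mean is
strictly below `κ_m(ϑ)/ϑ`, contradicting `κ_m(ϑ) = ϑ κ_m'(ϑ)`.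
-/

open Real ProbabilityTheory
open scoped ENNReal

lemma integral_lt_of_ae_lt {α : Type*} [MeasurableSpace α] {μ : Measure α}
    [IsProbabilityMeasure μ] {f : α → ℝ} {a : ℝ} (hf : Integrable f μ) (h : ∀ᵐ x ∂μ, f x < a) :
    ∫ x, f x ∂μ < a := by
  have hsupp : μ (Function.support fun x => a - f x) = 1 := by
    rw [← measure_univ (μ := μ)]
    refine measure_congr (ae_eq_univ.2 (measure_mono_null (fun x hx => ?_) (ae_iff.1 h)))
    exact fun hlt => hx (sub_ne_zero.2 hlt.ne')
  have hpos : 0 < ∫ x, a - f x ∂μ := by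
    rw [integral_pos_iff_support_of_nonneg_ae (h.mono fun x hx => sub_nonneg.2 hx.le)
      ((integrable_const a).sub hf), hsupp]
    exact one_pos
  rw [integral_sub (integrable_const a) hf, integral_const, probReal_univ, one_smul] at hpos
  linarith

lemma measure_pos_of_support_subset_of_lintegral_pos {α : Type*} [MeasurableSpace α]
    {μ : Measure α} {f : α → ℝ≥0∞} {s : Set α} (hfs : Function.support f ⊆ s)
    (hf : 0 < ∫⁻ x, f x ∂μ) : 0 < μ s :=
  pos_iff_ne_zero.2 fun hs => hf.ne' <| by
    rw [← setLIntegral_eq_of_support_subset hfs, setLIntegral_measure_zero _ _ hs]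

lemma ProbabilityTheory.deriv_cgf_lt {Ω : Type*} [MeasurableSpace Ω] {μ : Measure Ω} [NeZero μ]
    {X : Ω → ℝ} {t a : ℝ} (ht : t ∈ interior (integrableExpSet X μ)) (hX : ∀ᵐ ω ∂μ, X ω < a) :
    deriv (cgf X μ) t < a := by
  have hint : Integrable (fun ω => exp (t * X ω)) μ :=
    interior_subset (s := integrableExpSet X μ) ht
  have := isProbabilityMeasure_tilted hint
  rw [← integral_tilted_mul_self ht]
  exact integral_lt_of_ae_lt ((memLp_tilted_mul ht 1).integrable le_rfl)
    ((tilted_absolutelyContinuous _ _).ae_le hX)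

def intensityMeasure (m : Measure V) : Measure ℝ :=
  Measure.sum fun i => (m.restrict {p | i < p.1}).map (fun p => p.2 i)

lemma lintegral_intensityMeasure (m : Measure V) {f : ℝ → ℝ≥0∞} (hf : Measurable f) :
    ∫⁻ x, f x ∂intensityMeasure m = ∫⁻ p, ∑ i ∈ Finset.range p.1, f (p.2 i) ∂m := by
  have hS : ∀ i, MeasurableSet {p : V | i < p.1} := fun i => measurable_fst measurableSet_Ioi
  have hζ : ∀ i, Measurable fun p : V => p.2 i :=
    fun i => (measurable_pi_apply i).comp measurable_snd
  calc ∫⁻ x, f x ∂intensityMeasure m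
      = ∑' i, ∫⁻ p, {p : V | i < p.1}.indicator (fun p => f (p.2 i)) p ∂m := by
        rw [intensityMeasure, lintegral_sum_measure]
        refine tsum_congr fun i => ?_
        rw [lintegral_map hf (hζ i), lintegral_indicator (hS i)]
    _ = ∫⁻ p, ∑' i, {p : V | i < p.1}.indicator (fun p => f (p.2 i)) p ∂m :=
        (lintegral_tsum fun i => ((hf.comp (hζ i)).indicator (hS i)).aemeasurable).symm
    _ = ∫⁻ p, ∑ i ∈ Finset.range p.1, f (p.2 i) ∂m := by
        refine lintegral_congr fun p => ?_
        rw [tsum_eq_sum (s := Finset.range p.1)]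
        · exact Finset.sum_congr rfl fun i hi =>
            Set.indicator_of_mem (s := {p : V | i < p.1}) (Finset.mem_range.1 hi) _
        · exact fun i hi => Set.indicator_of_notMem (by simpa using hi) _

lemma L_eq_lintegral_intensityMeasure (m : Measure V) (θ : ℝ) :
    L m θ = ∫⁻ x, ENNReal.ofReal (exp (θ * -x)) ∂intensityMeasure m := by
  rw [lintegral_intensityMeasure m (by fun_prop), L]
  refine lintegral_congr fun p => ?_
  rw [ENNReal.ofReal_sum_of_nonneg fun i _ => (exp_pos _).le]
  simp only [neg_mul, mul_neg]

lemma intensityMeasure_ne_zero {m : Measure V} {θ : ℝ} (hθ : 0 < L m θ) :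
    intensityMeasure m ≠ 0 := fun h0 => hθ.ne' <| by
  rw [L_eq_lintegral_intensityMeasure, h0, lintegral_zero_measure]

lemma mgf_neg_intensityMeasure (m : Measure V) (θ : ℝ) :
    mgf (fun x => -x) (intensityMeasure m) θ = (L m θ).toReal := by
  rw [mgf, L_eq_lintegral_intensityMeasure, integral_eq_lintegral_of_nonneg_ae
    (ae_of_all _ fun x => (exp_pos _).le) (by fun_prop)]

lemma kap_eq_cgf_s16 (m : Measure V) : kap m = cgf (fun x => -x) (intensityMeasure m) :=
  funext fun θ => by rw [cgf, mgf_neg_intensityMeasure, kap]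

lemma mem_interior_integrableExpSet {m : Measure V} {ϑ ε : ℝ} (hε : 0 < ε)
    (hL : ∀ θ ∈ Set.Ioo (ϑ - ε) (ϑ + ε), L m θ < ⊤) :
    ϑ ∈ interior (integrableExpSet (fun x => -x) (intensityMeasure m)) := by
  refine mem_interior_iff_mem_nhds.2 <| Filter.mem_of_superset
    (Ioo_mem_nhds (a := ϑ - ε) (b := ϑ + ε) (by linarith) (by linarith)) fun θ hθ => ?_
  have hθ := hL θ hθ
  rw [L_eq_lintegral_intensityMeasure] at hθ
  exact (lintegral_ofReal_ne_top_iff_integrable (by fun_prop)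
    (ae_of_all _ fun x => (exp_pos _).le)).1 hθ.ne

lemma deriv_kap_lt {m : Measure V} {ϑ ε a : ℝ} (hε : 0 < ε)
    (hL : ∀ θ ∈ Set.Ioo (ϑ - ε) (ϑ + ε), 0 < L m θ ∧ L m θ < ⊤)
    (ha : ∀ᵐ x ∂intensityMeasure m, -x < a) : deriv (kap m) ϑ < a := by
  have : NeZero (intensityMeasure m) :=
    ⟨intensityMeasure_ne_zero (hL ϑ ⟨by linarith, by linarith⟩).1⟩
  rw [kap_eq_cgf_s16]
  exact deriv_cgf_lt (mem_interior_integrableExpSet hε fun θ hθ => (hL θ hθ).2) ha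

theorem stmt_16_general (m : Measure V) (ϑ : ℝ) (hϑ : 0 < ϑ)
    (hfin : ∃ ε > (0:ℝ), ∀ θ ∈ Set.Ioo (ϑ - ε) (ϑ + ε), 0 < L m θ ∧ L m θ < ⊤)
    (hcrit : kap m ϑ = ϑ * deriv (kap m) ϑ) :
    0 < (∫⁻ p, ∑ i ∈ Finset.range p.1,
          (if ϑ * p.2 i + kap m ϑ ≤ 0 then (1 : ENNReal) else 0) ∂m) ∧
    0 < m {p : V | ∃ i ∈ Finset.range p.1, ϑ * p.2 i + kap m ϑ ≤ 0} := by
  obtain ⟨ε, hε, hL⟩ := hfin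
  set S := {x : ℝ | ϑ * x + kap m ϑ ≤ 0}
  have hS : MeasurableSet S := measurableSet_le (by fun_prop) measurable_const
  have hcount : ∫⁻ p, ∑ i ∈ Finset.range p.1,
      (if ϑ * p.2 i + kap m ϑ ≤ 0 then (1 : ENNReal) else 0) ∂m = intensityMeasure m S := by
    rw [← lintegral_indicator_one hS,
      lintegral_intensityMeasure m (f := S.indicator 1) (measurable_one.indicator hS)]
    simp only [Set.indicator_apply, S, Set.mem_ofPred_eq, Pi.one_apply]
  have hSpos : 0 < intensityMeasure m S := by
    refine pos_iff_ne_zero.2 fun hS0 => ?_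
    have ha : ∀ᵐ x ∂intensityMeasure m, -x < kap m ϑ / ϑ := by
      refine ae_iff.2 (measure_mono_null (fun x hx => ?_) hS0)
      have hx : kap m ϑ ≤ -x * ϑ := (div_le_iff₀ hϑ).1 (not_lt.1 hx)
      show ϑ * x + kap m ϑ ≤ 0
      linarith
    have := deriv_kap_lt hε hL ha
    rw [hcrit, mul_div_cancel_left₀ _ hϑ.ne'] at this
    exact this.false
  refine ⟨hcount ▸ hSpos, measure_pos_of_support_subset_of_lintegral_pos ?_ (hcount ▸ hSpos)⟩
  intro p hp
  obtain ⟨i, hi, hne⟩ := Finset.exists_ne_zero_of_sum_ne_zero hp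
  exact ⟨i, hi, of_not_not fun h => hne (if_neg h)⟩

/-- if `κ_m(ϑ) = ϑ κ_m'(ϑ)` (boundary case), then
`∫ ∑_{i<N} 1_{ϑζ_i + κ_m(ϑ) ≤ 0} dm > 0`; in particular the set of `(N,ζ)` admitting some
`i < N` with `ϑζ_i + κ_m(ϑ) ≤ 0` has positive `m`-measure. -/
theorem stmt_16 (m : Measure V) [IsProbabilityMeasure m] (ϑ : ℝ) (hϑ : 0 < ϑ)
    (hfin : ∃ ε > (0:ℝ), ∀ θ ∈ Set.Ioo (ϑ - ε) (ϑ + ε), 0 < L m θ ∧ L m θ < ⊤)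
    (hcrit : kap m ϑ = ϑ * deriv (kap m) ϑ) :
    0 < (∫⁻ p, ∑ i ∈ Finset.range p.1,
          (if ϑ * p.2 i + kap m ϑ ≤ 0 then (1 : ENNReal) else 0) ∂m) ∧
    0 < m {p : V | ∃ i ∈ Finset.range p.1, ϑ * p.2 i + kap m ϑ ≤ 0} :=
  stmt_16_general m ϑ hϑ hfin hcrit

end
end
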